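/- For every integer d ≥ 2, every real n > 1, and every real k with 0 < k < 1, the function R_{d,n}(k) = (1/d)·(1/(2n) − (√n − k)/(2n^{3/2}))·(d(k − 2√(n−1)) − k)·((√n − k)/√n)^{(1/d)−1} − (d/√(n−1))·(((√n − k)/√n)^{1/d} − 1) satisfies R_{d,n}(k) > 0; moreover R_{d,n}(0) = 0. -/

import Mathlib

lemma lemB (t : ℝ) (ht0 : 0 ≤ t) (ht1 : t ≤ 1) (j : ℕ) :
    ((j:ℝ)+1) * t^j * (1-t) ≤ 1 - t^(j+1) := by
  induction j with
  | zero => simp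
  | succ j ih =>
    have hu0 : 0 ≤ t^j := pow_nonneg ht0 j
    have hu1 : t^j ≤ 1 := pow_le_one₀ ht0 ht1
    push_cast
    rw [pow_succ] at ih
    rw [show j+1+1 = j+2 by omega, show t^(j+2) = t^j*t*t by ring, show t^(j+1) = t^j*t by ring]
    generalize t^j = u at *
    have hj : (0:ℝ) ≤ (j:ℝ) := Nat.cast_nonneg j
    nlinarith [mul_le_mul_of_nonneg_left ih ht0,
      mul_nonneg (sub_nonneg.2 ht1) (sub_nonneg.2 (mul_le_one₀ hu1 ht0 ht1))]

lemma lemC (t : ℝ) (ht0 : 0 ≤ t) (ht1 : t ≤ 1) (d : ℕ) (hd : 1 ≤ d) :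
    2*(t*(1 - t^d)) ≤ (d:ℝ)*(t + t^d)*(1-t) := by
  induction d with
  | zero => omega
  | succ d ih =>
    rcases Nat.eq_or_lt_of_le hd with h|h
    · simp [← h]; nlinarith
    · have hd1 : 1 ≤ d := by omega
      have ih' := ih hd1
      obtain ⟨j, rfl⟩ : ∃ j, d = j+1 := ⟨d-1, by omega⟩
      have hB := lemB t ht0 ht1 j
      have hu0 : 0 ≤ t^j := pow_nonneg ht0 j
      have hu1 : t^j ≤ 1 := pow_le_one₀ ht0 ht1
      push_cast at ih' ⊢
      rw [show t^(j+1) = t^j*t by ring] at hB ih'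
      rw [show j+1+1 = j+2 by omega, show t^(j+2) = t^j*t*t by ring]
      generalize t^j = u at *
      have hj : (0:ℝ) ≤ (j:ℝ) := Nat.cast_nonneg j
      nlinarith [mul_le_mul_of_nonneg_left hB ht0,
        mul_nonneg (sub_nonneg.2 ht1) (mul_nonneg (mul_nonneg hu0 ht0) ht0),
        mul_nonneg (mul_nonneg hj hu0) (mul_nonneg ht0 (sub_nonneg.2 ht1))]

lemma Estar (D m s k : ℝ) (hD : 2 ≤ D) (hm : 0 < m) (hs : 1 < s)
    (hsm : s^2 = m^2+1) (hk0 : 0 < k) (hk1 : k < 1)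
    (hc : 0 < 2*D*m-(D-1)*k) :
    m*(2*D*m-(D-1)*k)*(2*D*s-(D+1)*k) < 4*D^2*s^2*(s-k) := by
  have hms : m < s := by nlinarith
  have hsle : s ≤ m + 1 := by nlinarith
  have hP : (s-m)*(s+m) = 1 := by nlinarith
  have hsk : 0 < s - k := by linarith
  have hD0 : 0 < D := by linarith
  have hD2 : 0 < 4*D^2*(s-k) := by positivity
  have hF : 0 < 4*D^2*(s-k)*(s+m) + 2*D*(D-1)*k*m - (D^2-1)*k*m*(s+m) := by
    rcases le_or_gt ((D+1)*(s+m)) (2*D) with h|h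
    · have h1 : 0 ≤ (D-1)*k*m * (2*D - (D+1)*(s+m)) := by
        apply mul_nonneg (mul_nonneg (mul_nonneg (by linarith) hk0.le) hm.le) (by linarith)
      have h2 : 0 < 4*D^2*(s-k)*(s+m) := mul_pos hD2 (by linarith)
      nlinarith
    · have hG : (s+1)*(D-1)*((D+1)*(s+m)-2*D) ≤ 4*D^2*m*(s+m) := by
        nlinarith [mul_nonneg (mul_nonneg hm.le hm.le) (sub_nonneg.2 hD),
          mul_pos hm hm, sq_nonneg (D-2), mul_nonneg hm.le (sub_nonneg.2 hD)]
      have key : m^2 < (s-k)*(s+1) := by nlinarith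
      have p1 : 4*D^2*(s+m)*m^2 < 4*D^2*(s+m)*((s-k)*(s+1)) := by
        apply mul_lt_mul_of_pos_left key (by positivity)
      have p2 : m*((s+1)*(D-1)*((D+1)*(s+m)-2*D)) ≤ m*(4*D^2*m*(s+m)) :=
        mul_le_mul_of_nonneg_left hG hm.le
      have p3 : 0 ≤ (1-k)*((D-1)*m*((D+1)*(s+m)-2*D)*(s+1)) := by
        apply mul_nonneg (by linarith)
        apply mul_nonneg (mul_nonneg (mul_nonneg (by linarith) hm.le) (by linarith)) (by linarith)
      nlinarith [hs, mul_pos hm hk0]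
  have hE : 0 < 4*D^2*(s-k) + 2*D*(D-1)*k*m*(s-m) - (D^2-1)*k^2*m := by
    have hkk : 0 ≤ (D^2-1)*m*(s+m)*(k-k^2) := by
      apply mul_nonneg (mul_nonneg (mul_nonneg (by nlinarith) hm.le) (by linarith))
      nlinarith
    have hEP : (4*D^2*(s-k) + 2*D*(D-1)*k*m*(s-m) - (D^2-1)*k^2*m)*(s+m)
        = (4*D^2*(s-k)*(s+m) + 2*D*(D-1)*k*m - (D^2-1)*k*m*(s+m))
          + (D^2-1)*m*(s+m)*(k-k^2) := by
      linear_combination (2*D*(D-1)*k*m)*hP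
    have hpos : 0 < (4*D^2*(s-k) + 2*D*(D-1)*k*m*(s-m) - (D^2-1)*k^2*m)*(s+m) := by
      rw [hEP]; linarith
    rcases mul_pos_iff.mp hpos with ⟨h1,_⟩|⟨_,h2⟩
    · exact h1
    · linarith
  have hfin : 4*D^2*s^2*(s-k) - m*(2*D*m-(D-1)*k)*(2*D*s-(D+1)*k)
      = 4*D^2*(s-k) + 2*D*(D-1)*k*m*(s-m) - (D^2-1)*k^2*m := by
    linear_combination (4*D^2*(s-k))*hsm
  linarith

/-- `R_{d,n}(k)`, the derivative in `n` of `Q_{d,k}(n)`: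
`R_{d,n}(k) = (1/d)(1/(2n) − (√n − k)/(2n^{3/2}))(d(k − 2√(n−1)) − k)((√n − k)/√n)^{1/d − 1}
− (d/√(n−1))(((√n − k)/√n)^{1/d} − 1)`. -/
noncomputable def Rfun (d : ℕ) (n : ℝ) (k : ℝ) : ℝ :=
  1 / (d : ℝ) * (1 / (2 * n) - (Real.sqrt n - k) / (2 * n ^ ((3 : ℝ) / 2))) *
      ((d : ℝ) * (k - 2 * Real.sqrt (n - 1)) - k) *
      ((Real.sqrt n - k) / Real.sqrt n) ^ (1 / (d : ℝ) - 1) -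
    (d : ℝ) / Real.sqrt (n - 1) * (((Real.sqrt n - k) / Real.sqrt n) ^ (1 / (d : ℝ)) - 1)

set_option maxHeartbeats 1600000 in
/-- For every integer `d ≥ 2` and real `n > 1`, one has `R_{d,n}(k) > 0` for all
`0 < k < 1`; moreover `R_{d,n}(0) = 0`. -/
theorem Rfun_pos_and_zero (d : ℕ) (hd : 2 ≤ d) (n : ℝ) (hn : 1 < n) :
    (∀ k : ℝ, 0 < k → k < 1 → 0 < Rfun d n k) ∧ Rfun d n 0 = 0 := by
  constructor
  · intro k hk0 hk1
    have hn0 : (0:ℝ) < n := by linarith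
    set s : ℝ := Real.sqrt n with hsdef
    set m : ℝ := Real.sqrt (n-1) with hmdef
    have hs1 : 1 < s := by
      have := Real.sqrt_lt_sqrt (by norm_num) hn
      rwa [Real.sqrt_one] at this
    have hs0 : (0:ℝ) < s := by linarith
    have hm0 : (0:ℝ) < m := Real.sqrt_pos.2 (by linarith)
    have hs2 : s^2 = n := Real.sq_sqrt hn0.le
    have hm2 : m^2 = n - 1 := Real.sq_sqrt (by linarith)
    have hd0 : (0:ℝ) < (d:ℝ) := by exact_mod_cast Nat.lt_of_lt_of_le Nat.zero_lt_two hd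
    have hD : (2:ℝ) ≤ (d:ℝ) := by exact_mod_cast hd
    have hn32 : n ^ ((3:ℝ)/2) = n * s := by
      rw [show (3:ℝ)/2 = 1 + 1/2 by norm_num, Real.rpow_add hn0, Real.rpow_one,
        hsdef, ← Real.sqrt_eq_rpow]
    set D : ℝ := (d:ℝ) with hDdef
    have hsk : 0 < s - k := by linarith
    set x : ℝ := (s - k)/s with hxdef
    have hx0 : 0 < x := div_pos hsk hs0
    have hx1 : x < 1 := by rw [hxdef, div_lt_one hs0]; linarith
    have hxs : s * x = s - k := by rw [hxdef]; field_simp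
    set t : ℝ := x ^ (1/D) with htdef
    have ht0 : 0 < t := Real.rpow_pos_of_pos hx0 _
    have ht1 : t < 1 := Real.rpow_lt_one hx0.le hx1 (by positivity)
    have htd : t ^ d = x := by
      rw [htdef, ← Real.rpow_natCast (x ^ (1/D)) d, ← Real.rpow_mul hx0.le]
      rw [show 1/D * (d:ℝ) = 1 by field_simp; exact hDdef.symm]
      exact Real.rpow_one x
    have hA : x ^ (1/D - 1) = t / x := by
      rw [Real.rpow_sub hx0, Real.rpow_one, htdef]
    -- rewrite Rfun as a single fraction
    have hRe : Rfun d n k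
        = (k*m*(D*(k-2*m)-k)*t + 2*D^2*n*s*x*(1-t)) / (2*D*n*s*x*m) := by
      simp only [Rfun, ← hsdef, ← hmdef, ← hDdef, hn32, ← hxdef, hA, ← htdef]
      rw [hxdef]
      field_simp
      ring
    rw [hRe]
    apply div_pos
    · -- key inequality
      have hval : 2*D^2*n*s*x*(1-t) = 2*D^2*s^2*(s-k)*(1-t) := by
        rw [← hs2]; linear_combination (2*D^2*s^2*(1-t))*hxs
      rw [hval]
      rcases le_or_gt (2*D*m - (D-1)*k) 0 with hc | hc
      · have h1 : k*m*(D*(k-2*m)-k)*t = (k*m*t)*(-(2*D*m-(D-1)*k)) := by ring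
        have h2 : 0 ≤ (k*m*t)*(-(2*D*m-(D-1)*k)) := by
          apply mul_nonneg (by positivity) (by linarith)
        have h3 : 0 < 2*D^2*s^2*(s-k)*(1-t) := by
          have : (0:ℝ) < 1 - t := by linarith
          positivity
        linarith [h1 ▸ h2]
      · -- case B
        have hk_eq : k = s*(1-x) := by
          rw [hxdef]; field_simp; ring
        have h2 := lemC t ht0.le ht1.le d (by omega)
        rw [htd] at h2
        have h3 : 1 - D*(1-t) ≤ x := by
          have := one_add_mul_le_pow (show (-2:ℝ) ≤ t - 1 by linarith) d
          rw [show (1:ℝ) + (t-1) = t by ring] at this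
          rw [← htd]
          push_cast at this ⊢
          linarith
        have h3' : D*t + D*x ≤ (D+1)*x + (D-1) := by nlinarith
        have hmcs : (0:ℝ) ≤ m*(2*D*m-(D-1)*k)*s := by positivity
        have hmcst : (0:ℝ) ≤ m*(2*D*m-(D-1)*k)*s*(1-t) := by
          apply mul_nonneg hmcs; linarith
        have hEst := Estar D m s k hD hm0 hs1 (by rw [hs2, hm2]; ring) hk0 hk1 hc
        have chain : k*m*(2*D*m-(D-1)*k)*t*2 < 4*D^2*s^2*(s-k)*(1-t) := by
          calc k*m*(2*D*m-(D-1)*k)*t*2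
              = (m*(2*D*m-(D-1)*k)*s)*(2*(t*(1-x))) := by
                rw [hk_eq]; ring
            _ ≤ (m*(2*D*m-(D-1)*k)*s)*(D*(t+x)*(1-t)) :=
                mul_le_mul_of_nonneg_left h2 hmcs
            _ = (m*(2*D*m-(D-1)*k)*s*(1-t))*(D*t+D*x) := by ring
            _ ≤ (m*(2*D*m-(D-1)*k)*s*(1-t))*((D+1)*x+(D-1)) :=
                mul_le_mul_of_nonneg_left h3' hmcst
            _ = (m*(2*D*m-(D-1)*k)*(1-t))*((D+1)*(s*x)+(D-1)*s) := by ring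
            _ = (1-t)*(m*(2*D*m-(D-1)*k)*(2*D*s-(D+1)*k)) := by
                rw [hxs]; ring
            _ < (1-t)*(4*D^2*s^2*(s-k)) := by
                apply mul_lt_mul_of_pos_left hEst (by linarith)
            _ = 4*D^2*s^2*(s-k)*(1-t) := by ring
        nlinarith [chain]
    · exact mul_pos (mul_pos (mul_pos (mul_pos (by linarith : (0:ℝ) < 2*D) hn0) hs0) hx0) hm0
  · 
    have hn0 : (0:ℝ) < n := by linarith
    have hs1 : 1 < Real.sqrt n := by
      have := Real.sqrt_lt_sqrt (by norm_num) hn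
      rwa [Real.sqrt_one] at this
    have hs0 : (0:ℝ) < Real.sqrt n := by linarith
    have hn32 : n ^ ((3:ℝ)/2) = n * Real.sqrt n := by
      rw [show (3:ℝ)/2 = 1 + 1/2 by norm_num, Real.rpow_add hn0, Real.rpow_one,
        ← Real.sqrt_eq_rpow]
    have hd0 : (0:ℝ) < (d:ℝ) := by exact_mod_cast Nat.lt_of_lt_of_le Nat.zero_lt_two hd
    simp only [Rfun, sub_zero, div_self hs0.ne', Real.one_rpow, sub_self, mul_zero, hn32]
    have : 1/(2*n) - Real.sqrt n/(2*(n*Real.sqrt n)) = 0 := by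
      field_simp
      ring
    rw [this]
    ring
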